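/- arXiv:1708.09369 — 7 statements merged into one kernel-verified Lean document; each statement's English description precedes it below -/
import Mathlib

section
/- Let g : (0,1) → ℝ be differentiable, increasing and concave. Let ψ₀, ψ₁ : (0,1) → (0,1) be twice differentiable with ψ₀' ≥ 0, sup ψ₀ ≤ inf ψ₁, ψ₀' + ψ₁' ≥ 0, ψ₀'' ≤ 0, and ψ₀'' + ψ₁'' ≤ 0. Let α, β : (0,1) → (0,∞) be differentiable with α + β = 1, α ≥ β, α decreasing and convex. Then g₁ := α·(g ∘ ψ₀) + β·(g ∘ ψ₁) is increasing. -/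
open Set

theorem stmt_0
    (g ψ₀ ψ₁ α β : ℝ → ℝ)
    (hg_diff : DifferentiableOn ℝ g (Ioo 0 1))
    (hg_mono : MonotoneOn g (Ioo 0 1))
    (hg_conc : ConcaveOn ℝ (Ioo 0 1) g)
    (hψ₀_maps : MapsTo ψ₀ (Ioo 0 1) (Ioo 0 1))
    (hψ₁_maps : MapsTo ψ₁ (Ioo 0 1) (Ioo 0 1))
    (hψ₀_diff : DifferentiableOn ℝ ψ₀ (Ioo 0 1))
    (hψ₁_diff : DifferentiableOn ℝ ψ₁ (Ioo 0 1))
    (hψ₀_diff2 : DifferentiableOn ℝ (deriv ψ₀) (Ioo 0 1))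
    (hψ₁_diff2 : DifferentiableOn ℝ (deriv ψ₁) (Ioo 0 1))
    (hH1 : ∀ x ∈ Ioo (0:ℝ) 1, 0 ≤ deriv ψ₀ x)
    (hH2 : ∀ x ∈ Ioo (0:ℝ) 1, ∀ y ∈ Ioo (0:ℝ) 1, ψ₀ x ≤ ψ₁ y)
    (hH3 : ∀ x ∈ Ioo (0:ℝ) 1, 0 ≤ deriv ψ₀ x + deriv ψ₁ x)
    (hH4a : ∀ x ∈ Ioo (0:ℝ) 1, deriv (deriv ψ₀) x ≤ 0)
    (hH4b : ∀ x ∈ Ioo (0:ℝ) 1, deriv (deriv ψ₀) x + deriv (deriv ψ₁) x ≤ 0)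
    (hα_diff : DifferentiableOn ℝ α (Ioo 0 1))
    (hβ_diff : DifferentiableOn ℝ β (Ioo 0 1))
    (hα_pos : ∀ x ∈ Ioo (0:ℝ) 1, 0 < α x)
    (hβ_pos : ∀ x ∈ Ioo (0:ℝ) 1, 0 < β x)
    (hH5 : ∀ x ∈ Ioo (0:ℝ) 1, α x + β x = 1)
    (hH6 : ∀ x ∈ Ioo (0:ℝ) 1, β x ≤ α x)
    (hα_anti : AntitoneOn α (Ioo 0 1))
    (hα_conv : ConvexOn ℝ (Ioo 0 1) α) :
    MonotoneOn (fun x => α x * g (ψ₀ x) + β x * g (ψ₁ x)) (Ioo 0 1) := by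

  -- ψ₀ is monotone on (0,1)
  have hconv : Convex ℝ (Ioo (0:ℝ) 1) := convex_Ioo 0 1
  have hψ₀_mono : MonotoneOn ψ₀ (Ioo 0 1) := by
    apply monotoneOn_of_deriv_nonneg hconv hψ₀_diff.continuousOn
    · rw [interior_Ioo]; exact hψ₀_diff
    · rw [interior_Ioo]; exact hH1
  -- ψ₀ + ψ₁ is monotone on (0,1)
  have hsum_mono : MonotoneOn (fun x => ψ₀ x + ψ₁ x) (Ioo 0 1) := by
    apply monotoneOn_of_deriv_nonneg hconv
      (hψ₀_diff.continuousOn.add hψ₁_diff.continuousOn)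
    · rw [interior_Ioo]; exact hψ₀_diff.add hψ₁_diff
    · rw [interior_Ioo]
      intro x hx
      have h0 : DifferentiableAt ℝ ψ₀ x :=
        (hψ₀_diff x hx).differentiableAt (isOpen_Ioo.mem_nhds hx)
      have h1 : DifferentiableAt ℝ ψ₁ x :=
        (hψ₁_diff x hx).differentiableAt (isOpen_Ioo.mem_nhds hx)
      rw [deriv_add h0 h1]
      exact hH3 x hx
  intro x hx y hy hxy
  simp only
  have hβx : β x = 1 - α x := by have := hH5 x hx; linarith
  have hβy : β y = 1 - α y := by have := hH5 y hy; linarith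
  have hαy_le : α y ≤ α x := hα_anti hx hy hxy
  have hψ₀x : ψ₀ x ∈ Ioo (0:ℝ) 1 := hψ₀_maps hx
  have hψ₀y : ψ₀ y ∈ Ioo (0:ℝ) 1 := hψ₀_maps hy
  have hψ₁x : ψ₁ x ∈ Ioo (0:ℝ) 1 := hψ₁_maps hx
  have hψ₁y : ψ₁ y ∈ Ioo (0:ℝ) 1 := hψ₁_maps hy
  have h01 : g (ψ₀ x) ≤ g (ψ₀ y) := hg_mono hψ₀x hψ₀y (hψ₀_mono hx hy hxy)
  have h02 : g (ψ₀ x) ≤ g (ψ₁ x) := hg_mono hψ₀x hψ₁x (hH2 x hx x hx)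
  have hαypos := hα_pos y hy
  have hβypos := hβ_pos y hy
  have hαβy : β y ≤ α y := hH6 y hy
  rw [hβx, hβy] at *
  rcases le_or_gt (ψ₁ x) (ψ₁ y) with h1le | h1lt
  · have h04 : g (ψ₁ x) ≤ g (ψ₁ y) := hg_mono hψ₁x hψ₁y h1le
    linarith [mul_nonneg hαypos.le (sub_nonneg.2 h01),
      mul_nonneg hβypos.le (sub_nonneg.2 h04),
      mul_nonneg (sub_nonneg.2 hαy_le) (sub_nonneg.2 h02)]
  · -- key case: ψ₁ decreases on [x,y]
    set p := ψ₀ x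
    set q := ψ₀ y
    set r := ψ₁ y
    set s := ψ₁ x
    have hsum : p + s ≤ q + r := hsum_mono hx hy hxy
    have hrs : r < s := h1lt
    have hpq : p < q := by linarith
    have hqr : q ≤ r := hH2 y hy y hy
    have hgr_le : g r ≤ g s := hg_mono hψ₁y hψ₁x hrs.le
    -- slope comparison from concavity
    have hslope : (g s - g r) / (s - r) ≤ (g q - g p) / (q - p) := by
      rcases eq_or_lt_of_le hqr with heq | hlt
      · have := hg_conc.slope_anti_adjacent hψ₀x hψ₁x hpq (heq ▸ hrs)
        rw [heq] at this ⊢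
        exact this
      · have t1 := hg_conc.slope_anti_adjacent hψ₀x hψ₁y hpq hlt
        have t2 := hg_conc.slope_anti_adjacent hψ₀y hψ₁x hlt hrs
        exact t2.trans t1
    have hkey : g s - g r ≤ g q - g p := by
      have hrs' : (0:ℝ) < s - r := by linarith
      have hpq' : (0:ℝ) < q - p := by linarith
      have hsl_nonneg : 0 ≤ (g s - g r) / (s - r) :=
        div_nonneg (by linarith) hrs'.le
      calc g s - g r = (g s - g r) / (s - r) * (s - r) := by field_simp
        _ ≤ (g q - g p) / (q - p) * (q - p) := by
            apply mul_le_mul hslope (by linarith) hrs'.le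
            exact le_trans hsl_nonneg hslope
        _ = g q - g p := by field_simp
    linarith [mul_nonneg (sub_nonneg.2 hαβy) (sub_nonneg.2 h01),
      mul_nonneg hβypos.le (by linarith : (0:ℝ) ≤ (g q - g p) - (g s - g r)),
      mul_nonneg (sub_nonneg.2 hαy_le) (sub_nonneg.2 h02)]
end

section
/- For α ∈ (0,1), define ψ₀(x) = x/(1+x)^(1−α) and ψ₁(x) = 1/(1+x)^(1−α) on [0,1], and h(x) = 1/x on (0,1]. Then |ψ₀'(x)|·h(ψ₀(x)) + |ψ₁'(x)|·h(ψ₁(x)) = h(x) for all x ∈ (0,1]. -/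
open Set

/-! Both branch derivatives carry the factor `1 / ((1 + x) (1 + x) ^ (1 - a))`, which cancels against
`h ∘ ψ₀ = (1 + x) ^ (1 - a) / x` and `h ∘ ψ₁ = (1 + x) ^ (1 - a)`; what remains is
`(1 + a x) / (x (1 + x)) + (1 - a) / (1 + x) = 1 / x`. -/

section OneAddRpow

variable {p x : ℝ}

theorem hasDerivAt_one_add_rpow (hx : 0 < 1 + x) :
    HasDerivAt (fun y : ℝ => (1 + y) ^ p) (p * (1 + x) ^ p / (1 + x)) x := by
  have h := ((hasDerivAt_id x).const_add 1).rpow_const (p := p) (Or.inl hx.ne')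
  simp only [id, one_mul, Real.rpow_sub_one hx.ne'] at h
  simpa only [mul_div_assoc] using h

theorem hasDerivAt_div_one_add_rpow (hx : 0 < 1 + x) :
    HasDerivAt (fun y : ℝ => y / (1 + y) ^ p)
      ((1 + (1 - p) * x) / ((1 + x) * (1 + x) ^ p)) x := by
  have hpos : 0 < (1 + x) ^ p := Real.rpow_pos_of_pos hx p
  refine ((hasDerivAt_id' x).div (hasDerivAt_one_add_rpow hx) hpos.ne').congr_deriv ?_
  field_simp
  ring

theorem hasDerivAt_one_div_one_add_rpow (hx : 0 < 1 + x) :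
    HasDerivAt (fun y : ℝ => 1 / (1 + y) ^ p) (-(p / ((1 + x) * (1 + x) ^ p))) x := by
  have hpos : 0 < (1 + x) ^ p := Real.rpow_pos_of_pos hx p
  refine ((hasDerivAt_const x (1 : ℝ)).div (hasDerivAt_one_add_rpow hx) hpos.ne').congr_deriv ?_
  field_simp
  ring

end OneAddRpow

theorem stmt_2 (a : ℝ) (ha : a ∈ Ioo (0:ℝ) 1) (x : ℝ) (hx : x ∈ Ioc (0:ℝ) 1) :
    |deriv (fun y : ℝ => y / (1 + y) ^ (1 - a)) x| * (1 / (x / (1 + x) ^ (1 - a)))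
      + |deriv (fun y : ℝ => 1 / (1 + y) ^ (1 - a)) x| * (1 / (1 / (1 + x) ^ (1 - a)))
      = 1 / x := by
  obtain ⟨ha0, ha1⟩ := ha
  obtain ⟨hx0, -⟩ := hx
  have h1x : 0 < 1 + x := by linarith
  rw [(hasDerivAt_div_one_add_rpow h1x).deriv, (hasDerivAt_one_div_one_add_rpow h1x).deriv,
    sub_sub_cancel, abs_of_pos (by positivity), abs_neg,
    abs_of_pos (div_pos (sub_pos.mpr ha1) (by positivity))]
  field_simp
  ring
end

section
/- Let (ψⱼ)ⱼ be a finite or countable family of C² functions ℝ⁺ → ℝ⁺ with each ψⱼ' > 0, each ψⱼ'' ≤ 0 for j ≥ 1, ψ₀'' ≥ 0, ψⱼ ≤ ψ₀ pointwise for all j ≥ 1, and ∑ⱼ ψⱼ' = 1 (hence ∑ⱼ ψⱼ'' = 0). If g : ℝ⁺ → ℝ is differentiable, positive and decreasing, then Pg := ∑ⱼ ψⱼ'·(g ∘ ψⱼ) is decreasing, i.e., (Pg)' ≤ 0. -/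
open Set

lemma deriv_nonpos_of_antitoneOn_aux {g : ℝ → ℝ} (h : AntitoneOn g (Ioi 0)) {y : ℝ}
    (hy : 0 < y) (hd : DifferentiableAt ℝ g y) : deriv g y ≤ 0 := by
  have ht : Filter.Tendsto (slope g y) (nhdsWithin y (Ioi y)) (nhds (deriv g y)) :=
    (hasDerivAt_iff_tendsto_slope.mp hd.hasDerivAt).mono_left
      (nhdsWithin_mono _ (fun z hz => ne_of_gt hz))
  refine le_of_tendsto ht ?_
  filter_upwards [self_mem_nhdsWithin] with z hz
  have hgz : g z ≤ g y := h (mem_Ioi.mpr hy) (mem_Ioi.mpr (hy.trans hz)) (le_of_lt hz)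
  rw [slope_def_field, div_eq_inv_mul]
  exact mul_nonpos_of_nonneg_of_nonpos (inv_nonneg.mpr (by linarith [mem_Ioi.mp hz]))
    (by linarith)

theorem stmt_6
    (ψ : ℕ → ℝ → ℝ) (g : ℝ → ℝ)
    (hψ_maps : ∀ j, MapsTo (ψ j) (Ioi 0) (Ioi 0))
    (hψ_diff : ∀ j, ∀ x ∈ Ioi (0:ℝ), DifferentiableAt ℝ (ψ j) x)
    (hψ_diff2 : ∀ j, ∀ x ∈ Ioi (0:ℝ), DifferentiableAt ℝ (deriv (ψ j)) x)
    (hψ'_pos : ∀ j, ∀ x ∈ Ioi (0:ℝ), 0 < deriv (ψ j) x)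
    (hψ''_le : ∀ j ≥ 1, ∀ x ∈ Ioi (0:ℝ), deriv (deriv (ψ j)) x ≤ 0)
    (hψ₀'' : ∀ x ∈ Ioi (0:ℝ), 0 ≤ deriv (deriv (ψ 0)) x)
    (hψ_le : ∀ j ≥ 1, ∀ x ∈ Ioi (0:ℝ), ψ j x ≤ ψ 0 x)
    (hsum1 : ∀ x ∈ Ioi (0:ℝ), Summable (fun j => deriv (ψ j) x)
      ∧ ∑' j, deriv (ψ j) x = 1)
    (hsum2 : ∀ x ∈ Ioi (0:ℝ), Summable (fun j => deriv (deriv (ψ j)) x)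
      ∧ ∑' j, deriv (deriv (ψ j)) x = 0)
    (hg_diff : ∀ x ∈ Ioi (0:ℝ), DifferentiableAt ℝ g x)
    (hg_pos : ∀ x ∈ Ioi (0:ℝ), 0 < g x)
    (hg_anti : AntitoneOn g (Ioi 0))
    (hsum3 : ∀ x ∈ Ioi (0:ℝ), Summable (fun j => deriv (ψ j) x * g (ψ j x)))
    (hsum4 : ∀ x ∈ Ioi (0:ℝ),
      Summable (fun j => deriv (deriv (ψ j)) x * g (ψ j x)
        + (deriv (ψ j) x) ^ 2 * deriv g (ψ j x)))
    (htermwise : ∀ x ∈ Ioi (0:ℝ),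
      deriv (fun y => ∑' j, deriv (ψ j) y * g (ψ j y)) x
        = ∑' j, (deriv (deriv (ψ j)) x * g (ψ j x)
            + (deriv (ψ j) x) ^ 2 * deriv g (ψ j x))) :
    ∀ x ∈ Ioi (0:ℝ), deriv (fun y => ∑' j, deriv (ψ j) y * g (ψ j y)) x ≤ 0 := by
  intro x hx
  rw [htermwise x hx]
  have hx0 : ∀ j, ψ j x ∈ Ioi (0:ℝ) := fun j => hψ_maps j hx
  have hcsum : Summable (fun j => deriv (deriv (ψ j)) x * g (ψ 0 x)) :=
    (hsum2 x hx).1.mul_right _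
  have key : ∀ j, deriv (deriv (ψ j)) x * g (ψ j x)
      + (deriv (ψ j) x) ^ 2 * deriv g (ψ j x)
      ≤ deriv (deriv (ψ j)) x * g (ψ 0 x) := by
    intro j
    have hb : (deriv (ψ j) x) ^ 2 * deriv g (ψ j x) ≤ 0 :=
      mul_nonpos_of_nonneg_of_nonpos (sq_nonneg _)
        (deriv_nonpos_of_antitoneOn_aux hg_anti (hx0 j) (hg_diff _ (hx0 j)))
    have ha : deriv (deriv (ψ j)) x * g (ψ j x) ≤ deriv (deriv (ψ j)) x * g (ψ 0 x) := by
      rcases Nat.eq_zero_or_pos j with rfl | hj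
      · exact le_rfl
      · exact mul_le_mul_of_nonpos_left
          (hg_anti (hx0 j) (hx0 0) (hψ_le j hj x hx)) (hψ''_le j hj x hx)
    linarith
  calc ∑' j, (deriv (deriv (ψ j)) x * g (ψ j x)
        + (deriv (ψ j) x) ^ 2 * deriv g (ψ j x))
      ≤ ∑' j, deriv (deriv (ψ j)) x * g (ψ 0 x) :=
        Summable.tsum_le_tsum key (hsum4 x hx) hcsum
    _ = (∑' j, deriv (deriv (ψ j)) x) * g (ψ 0 x) := tsum_mul_right
    _ = 0 := by rw [(hsum2 x hx).2, zero_mul]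
end

section
/- Let (r_p)_{p∈ℕ} be a decreasing sequence of positive reals whose series ∑ r_p diverges. Then for each q ∈ ℤ⁺ and each j ∈ {0,…,q−1}, the ratio S_{j,k} := (∑_{p=0}^{k} r_p)^{-1} · ∑_{0≤p≤k, p≡j (mod q)} r_p converges to 1/q as k → ∞. -/
open Filter Finset

section aux

variable (r : ℕ → ℝ) (q : ℕ)

lemma aux_block (hq : 0 < q) (j : ℕ) (hj : j < q) (m : ℕ) :
    ∑ p ∈ range (m * q), (if p % q = j then r p else 0) = ∑ i ∈ range m, r (i * q + j) := by
  induction m with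
  | zero => simp
  | succ m ih =>
    rw [Nat.succ_mul, Finset.sum_range_add, ih, Finset.sum_range_succ]
    congr 1
    have : ∀ i ∈ range q, (if (m * q + i) % q = j then r (m * q + i) else 0)
        = if i = j then r (m * q + i) else 0 := by
      intro i hi
      rw [Finset.mem_range] at hi
      rw [Nat.mul_comm m q, Nat.mul_add_mod, Nat.mod_eq_of_lt hi, Nat.mul_comm q m]
    rw [Finset.sum_congr rfl this, Finset.sum_ite_eq' (range q) j (fun i => r (m * q + i))]
    simp [Finset.mem_range.mpr hj]

lemma aux_compare (hr_pos : ∀ p, 0 < r p) (hr_dec : ∀ p, r (p + 1) ≤ r p)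
    (j j' : ℕ) (hj : j < q) (hj' : j' < q) (m : ℕ) :
    ∑ i ∈ range m, r (i * q + j') ≤ r 0 + ∑ i ∈ range m, r (i * q + j) := by
  have hanti : Antitone r := antitone_nat_of_succ_le hr_dec
  rcases le_or_gt j j' with h | h
  · have : ∑ i ∈ range m, r (i * q + j') ≤ ∑ i ∈ range m, r (i * q + j) :=
      Finset.sum_le_sum fun i _ => hanti (by omega)
    linarith [(hr_pos 0).le]
  · cases m with
    | zero => simp [(hr_pos 0).le]
    | succ n =>
      rw [Finset.sum_range_succ' (fun i => r (i * q + j')) n]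
      have h1 : ∑ i ∈ range n, r ((i + 1) * q + j') ≤ ∑ i ∈ range n, r (i * q + j) :=
        Finset.sum_le_sum fun i _ => hanti (by nlinarith)
      have h2 : ∑ i ∈ range n, r (i * q + j) ≤ ∑ i ∈ range (n + 1), r (i * q + j) := by
        rw [Finset.sum_range_succ]
        linarith [(hr_pos (n * q + j)).le]
      have h3 : r (0 * q + j') ≤ r 0 := hanti (by omega)
      linarith

lemma aux_T_compare (hr_pos : ∀ p, 0 < r p) (hr_dec : ∀ p, r (p + 1) ≤ r p)
    (hq : 0 < q) (j j' : ℕ) (hj : j < q) (hj' : j' < q) (k : ℕ) :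
    ∑ p ∈ range (k + 1), (if p % q = j' then r p else 0)
      ≤ 2 * r 0 + ∑ p ∈ range (k + 1), (if p % q = j then r p else 0) := by
  have hanti : Antitone r := antitone_nat_of_succ_le hr_dec
  set m := k / q with hm
  have hdm := Nat.div_add_mod k q
  have hmod := Nat.mod_lt k hq
  have hk1 : k + 1 ≤ (m + 1) * q := by
    have h0 : (m + 1) * q = q * m + q := by ring
    have hdm' : q * m + k % q = k := by rw [hm]; exact hdm
    linarith
  have hk2 : m * q ≤ k + 1 := (Nat.div_mul_le_self k q).trans (Nat.le_succ k)
  have hnn : ∀ p, 0 ≤ (if p % q = j' then r p else 0) := by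
    intro p; split <;> simp [(hr_pos _).le]
  have step1 : ∑ p ∈ range (k + 1), (if p % q = j' then r p else 0)
      ≤ ∑ p ∈ range ((m + 1) * q), (if p % q = j' then r p else 0) :=
    Finset.sum_le_sum_of_subset_of_nonneg
      (Finset.range_subset_range.mpr hk1) (fun p _ _ => hnn p)
  rw [aux_block r q hq j' hj'] at step1
  have step2 : ∑ i ∈ range (m + 1), r (i * q + j') ≤ r 0 + ∑ i ∈ range (m + 1), r (i * q + j) :=
    aux_compare r q hr_pos hr_dec j j' hj hj' (m + 1)
  have step3 : ∑ i ∈ range (m + 1), r (i * q + j)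
      = ∑ i ∈ range m, r (i * q + j) + r (m * q + j) := Finset.sum_range_succ _ _
  have step4 : ∑ i ∈ range m, r (i * q + j)
      ≤ ∑ p ∈ range (k + 1), (if p % q = j then r p else 0) := by
    rw [← aux_block r q hq j hj]
    refine Finset.sum_le_sum_of_subset_of_nonneg (Finset.range_subset_range.mpr hk2) ?_
    intro p _ _; split <;> simp [(hr_pos _).le]
  have step5 : r (m * q + j) ≤ r 0 := hanti (Nat.zero_le _)
  linarith

lemma aux_total (hq : 0 < q) (k : ℕ) :
    ∑ p ∈ range (k + 1), r p
      = ∑ j' ∈ range q, ∑ p ∈ range (k + 1), (if p % q = j' then r p else 0) := by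
  rw [Finset.sum_comm]
  refine Finset.sum_congr rfl fun p _ => ?_
  rw [Finset.sum_ite_eq (range q) (p % q) (fun _ => r p)]
  simp [Finset.mem_range.mpr (Nat.mod_lt p hq)]

end aux

theorem stmt_7
    (r : ℕ → ℝ)
    (hr_pos : ∀ p, 0 < r p)
    (hr_dec : ∀ p, r (p + 1) ≤ r p)
    (hr_div : Tendsto (fun k => ∑ p ∈ range (k + 1), r p) atTop atTop)
    (q : ℕ) (hq : 0 < q) (j : ℕ) (hj : j < q) :
    Tendsto
      (fun k => (∑ p ∈ range (k + 1), if p % q = j then r p else 0)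
        / (∑ p ∈ range (k + 1), r p))
      atTop (nhds (1 / (q : ℝ))) := by
  set T : ℕ → ℝ := fun k => ∑ p ∈ range (k + 1), (if p % q = j then r p else 0) with hT
  set S : ℕ → ℝ := fun k => ∑ p ∈ range (k + 1), r p with hS
  have hSpos : ∀ k, 0 < S k := fun k =>
    Finset.sum_pos (fun p _ => hr_pos p) (by simp)
  have hqR : (0 : ℝ) < q := by exact_mod_cast hq
  -- key two-sided bound
  have hbound : ∀ k, |T k / S k - 1 / q| ≤ 2 * r 0 / S k := by
    intro k
    have hub : S k ≤ q * T k + q * (2 * r 0) := by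
      have := aux_total r q hq k
      calc S k = ∑ j' ∈ range q, ∑ p ∈ range (k + 1), (if p % q = j' then r p else 0) := this
        _ ≤ ∑ _j' ∈ range q, (2 * r 0 + T k) := by
            refine Finset.sum_le_sum fun j' hj' => ?_
            exact aux_T_compare r q hr_pos hr_dec hq j j' hj (Finset.mem_range.mp hj') k
        _ = q * (2 * r 0 + T k) := by rw [Finset.sum_const, Finset.card_range]; ring
        _ = q * T k + q * (2 * r 0) := by ring
    have hlb : q * T k ≤ S k + q * (2 * r 0) := by
      have := aux_total r q hq k
      have h1 : ∀ j' ∈ range q, T k ≤ 2 * r 0 + ∑ p ∈ range (k + 1), (if p % q = j' then r p else 0) :=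
        fun j' hj' => aux_T_compare r q hr_pos hr_dec hq j' j (Finset.mem_range.mp hj') hj k
      have h2 : ∑ _j' ∈ range q, T k
          ≤ ∑ j' ∈ range q, (2 * r 0 + ∑ p ∈ range (k + 1), (if p % q = j' then r p else 0)) :=
        Finset.sum_le_sum h1
      rw [Finset.sum_const, Finset.card_range, Finset.sum_add_distrib, Finset.sum_const,
        Finset.card_range, ← this] at h2
      simp only [nsmul_eq_mul] at h2
      linarith
    have hSk := hSpos k
    have hnum : |T k * q - S k * 1| ≤ 2 * r 0 * q := by
      rw [abs_le]; constructor <;> nlinarith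
    calc |T k / S k - 1 / q| = |T k * q - S k * 1| / (S k * q) := by
          rw [div_sub_div _ _ hSk.ne' hqR.ne', abs_div,
            abs_of_pos (by positivity : (0:ℝ) < S k * q)]
      _ ≤ (2 * r 0 * q) / (S k * q) := by
          apply div_le_div_of_nonneg_right hnum (by positivity) |>.trans_eq rfl
      _ = 2 * r 0 / S k := by
          exact mul_div_mul_right _ _ hqR.ne'
  have hzero : Tendsto (fun k => 2 * r 0 / S k) atTop (nhds 0) :=
    Tendsto.div_atTop tendsto_const_nhds hr_div
  have : Tendsto (fun k => T k / S k - 1 / q) atTop (nhds 0) := by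
    refine squeeze_zero_norm (fun k => ?_) hzero
    simpa using hbound k
  have h2 : Tendsto (fun k => (T k / S k - 1 / q) + 1 / q) atTop (nhds (0 + 1 / q)) :=
    this.add tendsto_const_nhds
  simp only [zero_add] at h2
  exact h2.congr fun k => by ring
end

section
/- Let (r_p) be a decreasing sequence of positive reals with divergent sum, let q ∈ ℤ⁺, and let f₀,…,f_{q−1} ∈ ℂ. Then lim_{k→∞} (∑_{p=0}^{k} r_p)^{-1} · ∑_{j=0}^{q−1} f_j · ∑_{0≤p≤k, p≡j (mod q)} r_p = (1/q) ∑_{j=0}^{q−1} f_j. -/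
/-!
Since `r` is antitone, the term `r (q * (m + 1) + j)` of residue class `j` is at most the term
`r (q * m + j')` of any other class `j' < q`, so any two class sums over `range n` differ by at most
`r 0`. Hence `q` times each class sum is within `q * r 0` of the full partial sum, which tends to
infinity; every class therefore carries asymptotically the fraction `1 / q` of the mass.
-/

open Filter Finset Topology Asymptotics

def residueClassSum {M : Type*} [AddCommMonoid M] (r : ℕ → M) (q j n : ℕ) : M :=
  ∑ p ∈ range n, if p % q = j then r p else 0

theorem residueClassSum_eq_sum_range {M : Type*} [AddCommMonoid M] (r : ℕ → M) {q j : ℕ}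
    (hj : j < q) (n : ℕ) :
    residueClassSum r q j n = ∑ m ∈ range n, if q * m + j < n then r (q * m + j) else 0 := by
  rw [residueClassSum, ← sum_filter, ← sum_filter]
  have hmod (m : ℕ) : (q * m + j) % q = j := by rw [Nat.mul_add_mod, Nat.mod_eq_of_lt hj]
  have hdiv (m : ℕ) : (q * m + j) / q = m := by
    rw [Nat.mul_add_div (by omega), Nat.div_eq_of_lt hj, add_zero]
  refine sum_nbij' (· / q) (q * · + j) ?_ ?_ ?_ ?_ ?_ <;> simp only [mem_filter, mem_range]
  · rintro p ⟨hp, rfl⟩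
    rw [Nat.div_add_mod]
    exact ⟨(Nat.div_le_self p q).trans_lt hp, hp⟩
  · rintro m ⟨-, hm⟩
    exact ⟨hm, hmod m⟩
  · rintro p ⟨-, rfl⟩
    exact Nat.div_add_mod p q
  · rintro m -
    exact hdiv m
  · rintro p ⟨-, rfl⟩
    rw [Nat.div_add_mod]

theorem sum_residueClassSum {M : Type*} [AddCommMonoid M] (r : ℕ → M) {q : ℕ} (hq : 0 < q)
    (n : ℕ) :
    ∑ j ∈ range q, residueClassSum r q j n = ∑ p ∈ range n, r p := by
  simp only [residueClassSum]
  rw [sum_comm]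
  refine sum_congr rfl fun p _ => ?_
  rw [sum_ite_eq, if_pos (mem_range.2 (Nat.mod_lt p hq))]

variable {r : ℕ → ℝ} {q j j' : ℕ}

theorem residueClassSum_le_add (hr : Antitone r) (hr0 : ∀ p, 0 ≤ r p) (hj : j < q)
    (hj' : j' < q) (n : ℕ) : residueClassSum r q j n ≤ r 0 + residueClassSum r q j' n := by
  rw [residueClassSum_eq_sum_range r hj, residueClassSum_eq_sum_range r hj']
  have hn : ¬ q * n + j < n := by nlinarith
  calc (∑ m ∈ range n, if q * m + j < n then r (q * m + j) else 0)
      = ∑ m ∈ range (n + 1), if q * m + j < n then r (q * m + j) else 0 := by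
        rw [sum_range_succ, if_neg hn, add_zero]
    _ = (if q * 0 + j < n then r (q * 0 + j) else 0)
          + ∑ m ∈ range n, if q * (m + 1) + j < n then r (q * (m + 1) + j) else 0 := by
        rw [sum_range_succ', add_comm]
    _ ≤ r 0 + ∑ m ∈ range n, if q * m + j' < n then r (q * m + j') else 0 := by
        gcongr with m
        · split_ifs
          exacts [hr (Nat.zero_le _), hr0 0]
        · rw [mul_add_one]
          split_ifs with h h'
          · exact hr (by omega)
          · omega
          · exact hr0 _
          · exact le_rfl

theorem abs_residueClassSum_sub_le (hr : Antitone r) (hr0 : ∀ p, 0 ≤ r p) (hj : j < q)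
    (hj' : j' < q) (n : ℕ) : |residueClassSum r q j n - residueClassSum r q j' n| ≤ r 0 := by
  have hle := residueClassSum_le_add hr hr0 hj hj' n
  have hge := residueClassSum_le_add hr hr0 hj' hj n
  exact abs_sub_le_iff.2 ⟨by linarith, by linarith⟩

theorem abs_mul_residueClassSum_sub_le (hr : Antitone r) (hr0 : ∀ p, 0 ≤ r p) (hj : j < q)
    (n : ℕ) : |q * residueClassSum r q j n - ∑ p ∈ range n, r p| ≤ q * r 0 := by
  calc |q * residueClassSum r q j n - ∑ p ∈ range n, r p|
      = |∑ j' ∈ range q, (residueClassSum r q j n - residueClassSum r q j' n)| := by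
        rw [sum_sub_distrib, sum_residueClassSum r (by omega), sum_const, card_range,
          nsmul_eq_mul]
    _ ≤ ∑ j' ∈ range q, |residueClassSum r q j n - residueClassSum r q j' n| :=
        abs_sum_le_sum_abs _ _
    _ ≤ ∑ j' ∈ range q, r 0 :=
        sum_le_sum fun j' hj' => abs_residueClassSum_sub_le hr hr0 hj (mem_range.1 hj') n
    _ = q * r 0 := by rw [sum_const, card_range, nsmul_eq_mul]

theorem tendsto_div_of_abs_sub_le {α : Type*} {l : Filter α} {a b : α → ℝ} {C : ℝ}
    (h : ∀ x, |a x - b x| ≤ C) (hb : Tendsto b l atTop) :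
    Tendsto (fun x => a x / b x) l (𝓝 1) := by
  have hbdd : (a - b) =O[l] (fun _ => (1 : ℝ)) :=
    IsBigO.of_bound C (Eventually.of_forall fun x => by simpa using h x)
  have hequiv : a ~[l] b :=
    hbdd.trans_isLittleO ((isLittleO_one_left_iff ℝ).2 (tendsto_norm_atTop_atTop.comp hb))
  exact (isEquivalent_iff_tendsto_one (hb.eventually_ne_atTop 0)).1 hequiv

theorem tendsto_residueClassSum_div (hr : Antitone r) (hr0 : ∀ p, 0 ≤ r p)
    (hS : Tendsto (fun n => ∑ p ∈ range n, r p) atTop atTop) (hj : j < q) :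
    Tendsto (fun n => residueClassSum r q j n / ∑ p ∈ range n, r p) atTop (𝓝 (1 / q)) := by
  have hq : (q : ℝ) ≠ 0 := Nat.cast_ne_zero.2 (by omega)
  have hmul := (tendsto_div_of_abs_sub_le (abs_mul_residueClassSum_sub_le hr hr0 hj) hS).const_mul
    (q : ℝ)⁻¹
  convert hmul using 2 with n
  · field_simp
  · simp

theorem stmt_8_general
    (r : ℕ → ℝ)
    (hr_pos : ∀ p, 0 < r p)
    (hr_dec : ∀ p, r (p + 1) ≤ r p)
    (hr_div : Tendsto (fun k => ∑ p ∈ range (k + 1), r p) atTop atTop)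
    (q : ℕ) (f : ℕ → ℂ) :
    Tendsto
      (fun k => ((∑ p ∈ range (k + 1), r p : ℝ) : ℂ)⁻¹
        * ∑ j ∈ range q, f j * ((∑ p ∈ range (k + 1), if p % q = j then r p else 0 : ℝ) : ℂ))
      atTop (nhds ((1 / (q : ℂ)) * ∑ j ∈ range q, f j)) := by
  have hS := (tendsto_add_atTop_iff_nat (f := fun n => ∑ p ∈ range n, r p) 1).1 hr_div
  have hclass (j : ℕ) (hj : j ∈ range q) :
      Tendsto
        (fun k => ((residueClassSum r q j (k + 1) / ∑ p ∈ range (k + 1), r p : ℝ) : ℂ)) atTop (𝓝 ((1 / q : ℝ) : ℂ)) :=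
    (Complex.continuous_ofReal.tendsto _).comp <|
      (tendsto_residueClassSum_div (antitone_nat_of_succ_le hr_dec) (fun p => (hr_pos p).le) hS
        (mem_range.1 hj)).comp (tendsto_add_atTop_nat 1)
  convert tendsto_finsetSum (range q) fun j hj => (hclass j hj).const_mul (f j) using 1
  · ext k
    simp only [residueClassSum, mul_sum]
    push_cast
    ring_nf
  · rw [mul_sum]
    push_cast
    ring_nf

theorem stmt_8
    (r : ℕ → ℝ)
    (hr_pos : ∀ p, 0 < r p)
    (hr_dec : ∀ p, r (p + 1) ≤ r p)
    (hr_div : Tendsto (fun k => ∑ p ∈ range (k + 1), r p) atTop atTop)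
    (q : ℕ) (hq : 0 < q) (f : ℕ → ℂ) :
    Tendsto
      (fun k => ((∑ p ∈ range (k + 1), r p : ℝ) : ℂ)⁻¹
        * ∑ j ∈ range q, f j * ((∑ p ∈ range (k + 1), if p % q = j then r p else 0 : ℝ) : ℂ))
      atTop (nhds ((1 / (q : ℂ)) * ∑ j ∈ range q, f j)) :=
  stmt_8_general r hr_pos hr_dec hr_div q f
end

section
/- Let T : (0,1) → (0,1) be a Markov map with countably many full branches satisfying (A1)-(A4), preserving an infinite absolutely continuous measure μ with μ([a,1)) < ∞ for all a ∈ (0,1) and μ((0,a)) = ∞. Then for every n ∈ ℕ, lim_{a→0⁺} μ(T^{-n}[a,1) Δ [a,1)) / μ([a,1)) = 0. -/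
/-!
A point of `[c, 1) \ T⁻¹[c, 1)` below `a₁` lies in the branch at `0`, where convexity and
`φ₀'(0) = 1` give `φ₀ x ≥ x ≥ c`; so, up to the single point where `φ₀ = 1`, only points of
`[a₁, 1)` can leave `[c, 1)`. As `μ` is `T`-invariant and `μ[c, 1) < ∞`, the two halves of
`T⁻¹[c, 1) Δ [c, 1)` have equal measure, hence `μ(T⁻ⁿ[c, 1) Δ [c, 1)) ≤ 2 n μ[a₁, 1)` stays
bounded while `μ[c, 1) → ∞` as `c → 0⁺`.
-/

open MeasureTheory Filter Set
open scoped symmDiff Topology ENNReal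

namespace MeasureTheory.MeasurePreserving

variable {α : Type*} [MeasurableSpace α] {μ : Measure α} {T : α → α} {s : Set α}

theorem measure_preimage_diff_eq (hT : MeasurePreserving T μ μ) (hs : MeasurableSet s)
    (hfin : μ s ≠ ∞) : μ (T ⁻¹' s \ s) = μ (s \ T ⁻¹' s) := by
  have hinter : μ (T ⁻¹' s ∩ s) ≠ ∞ := measure_ne_top_of_subset inter_subset_right hfin
  have hpre : μ (T ⁻¹' s \ s) + μ (T ⁻¹' s ∩ s) = μ (s \ T ⁻¹' s) + μ (T ⁻¹' s ∩ s) := by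
    rw [measure_sdiff_add_inter _ hs, inter_comm, measure_sdiff_add_inter _ (hT.measurable hs),
      hT.measure_preimage hs.nullMeasurableSet]
  exact (ENNReal.add_left_inj hinter).1 hpre

theorem measure_symmDiff_preimage_iterate_le_two_mul (hT : MeasurePreserving T μ μ)
    (hs : MeasurableSet s) (hfin : μ s ≠ ∞) (n : ℕ) :
    μ ((T^[n] ⁻¹' s) ∆ s) ≤ 2 * n * μ (s \ T ⁻¹' s) := by
  have hone : μ (s ∆ (T ⁻¹' s)) = 2 * μ (s \ T ⁻¹' s) := by
    rw [measure_symmDiff_eq hs.nullMeasurableSet (hT.measurable hs).nullMeasurableSet,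
      hT.measure_preimage_diff_eq hs hfin, two_mul]
  calc μ ((T^[n] ⁻¹' s) ∆ s) = μ (s ∆ (T^[n] ⁻¹' s)) := by rw [symmDiff_comm]
    _ ≤ n • μ (s ∆ (T ⁻¹' s)) := hT.measure_symmDiff_preimage_iterate_le hs.nullMeasurableSet n
    _ = 2 * n * μ (s \ T ⁻¹' s) := by rw [nsmul_eq_mul, hone]; ring

end MeasureTheory.MeasurePreserving

theorem tendsto_measure_Ico_nhdsGT_top {μ : Measure ℝ} {a b : ℝ} (h : μ (Ioo a b) = ∞) :
    Tendsto (fun c => μ (Ico c b)) (𝓝[>] a) (𝓝 ∞) := by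
  have : (atBot : Filter (Ioi a)).IsCountablyGenerated := by
    rw [← comap_coe_Ioi_nhdsGT a]
    infer_instance
  have hunion : (⋃ c : Ioi a, Ico (c : ℝ) b) = Ioo a b := by
    ext x
    simp only [mem_iUnion, mem_Ico, mem_Ioo, Subtype.exists, mem_Ioi, exists_prop]
    exact ⟨fun ⟨c, hac, hcx, hxb⟩ => ⟨hac.trans_le hcx, hxb⟩,
      fun ⟨hax, hxb⟩ => ⟨x, hax, le_rfl, hxb⟩⟩
  rw [← map_coe_Ioi_atBot a, tendsto_map'_iff, ← h, ← hunion]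
  exact tendsto_measure_iUnion_atBot fun c d hcd => Ico_subset_Ico_left hcd

theorem ConvexOn.add_mul_sub_le_of_hasDerivAt {S : Set ℝ} {f : ℝ → ℝ} {f' x y : ℝ}
    (hfc : ConvexOn ℝ S f) (hx : x ∈ S) (hy : y ∈ S) (hxy : x < y) (hf : HasDerivAt f f' x) :
    f x + f' * (y - x) ≤ f y := by
  have := hfc.le_slope_of_hasDerivAt hx hy hxy hf
  rw [slope_def_field, le_div_iff₀ (sub_pos.2 hxy)] at this
  linarith

theorem Ico_diff_preimage_Ico_subset {T f : ℝ → ℝ} {b c : ℝ} (hc : 0 < c)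
    (hf : MapsTo f (Icc 0 b) (Icc 0 1)) (hTf : ∀ x ∈ Ioo 0 b, T x = f x)
    (hle : ∀ x ∈ Ioo 0 b, x ≤ f x) :
    Ico c 1 \ T ⁻¹' Ico c 1 ⊆ Ico b 1 ∪ {x ∈ Icc 0 b | f x = 1} := by
  rintro x ⟨⟨hcx, hx1⟩, hTx⟩
  rcases le_or_gt b x with hbx | hxb
  · exact Or.inl ⟨hbx, hx1⟩
  have hx : x ∈ Ioo 0 b := ⟨hc.trans_le hcx, hxb⟩
  have hfx1 : f x ≤ 1 := (hf (Ioo_subset_Icc_self hx)).2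
  refine Or.inr ⟨Ioo_subset_Icc_self hx, hfx1.antisymm (not_lt.1 fun hlt => hTx ?_)⟩
  rw [mem_preimage, hTf x hx]
  exact ⟨hcx.trans (hle x hx), hlt⟩

theorem measure_Ico_diff_preimage_Ico_le {μ : Measure ℝ} (hμ : μ ≪ volume) {T f : ℝ → ℝ}
    {b c : ℝ} (hc : 0 < c) (hf : BijOn f (Icc 0 b) (Icc 0 1)) (hTf : ∀ x ∈ Ioo 0 b, T x = f x)
    (hle : ∀ x ∈ Ioo 0 b, x ≤ f x) :
    μ (Ico c 1 \ T ⁻¹' Ico c 1) ≤ μ (Ico b 1) := by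
  have hnull : μ {x ∈ Icc 0 b | f x = 1} = 0 :=
    hμ <| Set.Subsingleton.measure_zero
      (fun x hx y hy => hf.injOn hx.1 hy.1 (hx.2.trans hy.2.symm)) _
  calc μ (Ico c 1 \ T ⁻¹' Ico c 1) ≤ μ (Ico b 1 ∪ {x ∈ Icc 0 b | f x = 1}) :=
        measure_mono (Ico_diff_preimage_Ico_subset hc hf.mapsTo hTf hle)
    _ ≤ μ (Ico b 1) := (measure_union_le _ _).trans_eq (by rw [hnull, add_zero])

theorem ENNReal.tendsto_div_nhds_zero_of_le_of_tendsto_top {ι : Type*} {l : Filter ι}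
    {f g : ι → ℝ≥0∞} {C : ℝ≥0∞} (hC : C ≠ ∞) (hf : ∀ᶠ i in l, f i ≤ C)
    (hg : Tendsto g l (𝓝 ∞)) : Tendsto (fun i => f i / g i) l (𝓝 0) := by
  have hbound : Tendsto (fun i => C / g i) l (𝓝 0) := by
    simpa using ENNReal.Tendsto.const_div hg (Or.inr hC)
  refine tendsto_of_tendsto_of_tendsto_of_le_of_le' tendsto_const_nhds hbound
    (Eventually.of_forall fun _ => zero_le) ?_
  filter_upwards [hf] with i hi
  exact ENNReal.div_le_div_right hi _

theorem stmt_10_general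
    (T : ℝ → ℝ) (a : ℕ → ℝ) (φ : ℕ → ℝ → ℝ)
    (ha0 : a 0 = 0) (ha_mono : StrictMono a)
    -- (A1): each branch extends to a C² bijection onto [0,1]
    (hφ_bij : ∀ j, BijOn (φ j) (Icc (a j) (a (j + 1))) (Icc 0 1))
    (hTφ : ∀ j, ∀ x ∈ Ioo (a j) (a (j + 1)), T x = φ j x)
    -- (A4): indifferent fixed point at 0
    (hA4_conv : ConvexOn ℝ (Icc (a 0) (a 1)) (φ 0))
    (hA4_fix : φ 0 0 = 0) (hA4_der : deriv (φ 0) 0 = 1)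
    -- the invariant measure
    (μ : Measure ℝ) (hμ_ac : μ ≪ volume) (hμ_inv : MeasurePreserving T μ μ)
    (hμ_fin : ∀ c ∈ Ioo (0:ℝ) 1, μ (Ico c 1) < ⊤)
    (hμ_inf : ∀ c ∈ Ioo (0:ℝ) 1, μ (Ioo 0 c) = ⊤) :
    ∀ n : ℕ,
      Tendsto (fun c : ℝ => μ (symmDiff ((T^[n]) ⁻¹' (Ico c 1)) (Ico c 1)) / μ (Ico c 1))
        (nhdsWithin 0 (Ioi 0)) (nhds 0) := by
  intro n
  have ha1 : 0 < a 1 := ha0 ▸ ha_mono Nat.zero_lt_one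
  rw [ha0] at hA4_conv
  have hφ_ge : ∀ x ∈ Ioo 0 (a 1), x ≤ φ 0 x := fun x hx => by
    have hd : HasDerivAt (φ 0) 1 0 :=
      hA4_der ▸ (differentiableAt_of_deriv_ne_zero (by simp [hA4_der])).hasDerivAt
    simpa [hA4_fix] using hA4_conv.add_mul_sub_le_of_hasDerivAt (left_mem_Icc.2 ha1.le)
      (Ioo_subset_Icc_self hx) hx.1 hd
  have hlast_fin : μ (Ico (a 1) 1) ≠ ∞ := by
    rcases lt_or_ge (a 1) 1 with h | h
    · exact (hμ_fin _ ⟨ha1, h⟩).ne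
    · simp [Ico_eq_empty_of_le h]
  refine ENNReal.tendsto_div_nhds_zero_of_le_of_tendsto_top (C := 2 * n * μ (Ico (a 1) 1))
    (by finiteness) ?_ (tendsto_measure_Ico_nhdsGT_top ?_)
  · filter_upwards [Ioo_mem_nhdsGT one_pos] with c hc
    refine (hμ_inv.measure_symmDiff_preimage_iterate_le_two_mul measurableSet_Ico
      (hμ_fin c hc).ne n).trans (mul_le_mul_right ?_ _)
    exact measure_Ico_diff_preimage_Ico_le hμ_ac hc.1 (ha0 ▸ hφ_bij 0) (ha0 ▸ hTφ 0) hφ_ge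
  · exact measure_mono_top (Ioo_subset_Ioo_right (by norm_num)) (hμ_inf (1 / 2) (by norm_num))

theorem stmt_10
    (T : ℝ → ℝ) (a : ℕ → ℝ) (φ : ℕ → ℝ → ℝ)
    (ha0 : a 0 = 0) (ha_mono : StrictMono a) (ha_lim : Tendsto a atTop (nhds 1))
    -- (A1): each branch extends to a C² bijection onto [0,1]
    (hφ_smooth : ∀ j, ContDiffOn ℝ 2 (φ j) (Icc (a j) (a (j + 1))))
    (hφ_bij : ∀ j, BijOn (φ j) (Icc (a j) (a (j + 1))) (Icc 0 1))
    (hTφ : ∀ j, ∀ x ∈ Ioo (a j) (a (j + 1)), T x = φ j x)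
    -- (A2): uniform expansion away from the fixed point
    (Λ : ℝ) (hΛ : 1 < Λ)
    (hA2 : ∀ j ≥ 1, ∀ x ∈ Icc (a j) (a (j + 1)), Λ ≤ |deriv (φ j) x|)
    -- (A3): bounded distortion
    (K : ℝ) (hK : 0 < K)
    (hA3 : ∀ j, ∀ x ∈ Icc (a j) (a (j + 1)),
      |deriv (deriv (φ j)) x| ≤ K * (deriv (φ j) x) ^ 2)
    -- (A4): indifferent fixed point at 0
    (hA4_conv : ConvexOn ℝ (Icc (a 0) (a 1)) (φ 0))
    (hA4_fix : φ 0 0 = 0) (hA4_der : deriv (φ 0) 0 = 1)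
    (hA4_exp : ∀ x ∈ Ioc (0:ℝ) (a 1), 1 < deriv (φ 0) x)
    -- the invariant measure
    (μ : Measure ℝ) (hμ_ac : μ ≪ volume) (hμ_inv : MeasurePreserving T μ μ)
    (hμ_fin : ∀ c ∈ Ioo (0:ℝ) 1, μ (Ico c 1) < ⊤)
    (hμ_inf : ∀ c ∈ Ioo (0:ℝ) 1, μ (Ioo 0 c) = ⊤) :
    ∀ n : ℕ,
      Tendsto (fun c : ℝ => μ (symmDiff ((T^[n]) ⁻¹' (Ico c 1)) (Ico c 1)) / μ (Ico c 1))
        (nhdsWithin 0 (Ioi 0)) (nhds 0) :=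
  stmt_10_general T a φ ha0 ha_mono hφ_bij hTφ hA4_conv hA4_fix hA4_der μ hμ_ac hμ_inv hμ_fin hμ_inf
end

section
/- Let μ be a σ-finite measure on (0,1) with μ([a,1)) < ∞ for all a and μ((0,1)) = ∞. Let F : (0,1) → ℂ be bounded measurable with Avg(F) := lim_{a→0⁺} μ([a,1))^{-1} ∫ₐ¹ F dμ = 0, and fix ε > 0 with δ > 0 such that |∫ₐ¹ F dμ| < (ε/2)·μ([a,1)) for all a ≤ δ. Let γ : (0,1) → [0,∞) be an increasing function, constant on [δ,1), with ∫ γ dμ ≤ 1. Then |∫₀¹ F·γ dμ| ≤ ε/2. -/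
open MeasureTheory Set Filter Topology

/-!
Writing `γ x = ∫₀^∞ 𝟙[r < γ x] dr` and applying Fubini gives
`∫ γ F dμ = ∫₀^∞ (∫_{γ > r} F dμ) dr`. Since `γ` is monotone on `(0,1)` and maximal at `δ`,
every nonempty slice `{γ > r} ∩ (0,1)`, `r > 0`, is `[a,1)` or `(a,1)` with `0 < a ≤ δ`
(`a > 0` because the slice has finite measure while `μ (0,1) = ∞`), so
`‖∫_{slice} F dμ‖ ≤ ε/2 · μ(slice)`; the open case follows by exhausting `(a,1)` with
`[aₙ,1)`, `aₙ ↓ a`. Integrating in `r` and using the layer-cake formula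
`∫₀^∞ μ{γ > r} dr = ∫ γ dμ ≤ 1` gives the bound.
-/

lemma iUnion_Ico_eq_Ioo_of_tendsto {α : Type*} [LinearOrder α] [TopologicalSpace α]
    [ClosedIciTopology α] {u : ℕ → α} {a b : α} (hu : ∀ n, a < u n)
    (hlim : Tendsto u atTop (𝓝 a)) : ⋃ n, Ico (u n) b = Ioo a b := by
  refine subset_antisymm (iUnion_subset fun n => Ico_subset_Ioo_left (hu n)) fun x hx => ?_
  obtain ⟨n, hn⟩ := (hlim.eventually (eventually_lt_nhds hx.1)).exists
  exact mem_iUnion.2 ⟨n, hn.le, hx.2⟩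

lemma Ioo_csInf_subset_and_subset_Ico {α : Type*} [ConditionallyCompleteLinearOrder α]
    {S : Set α} {b : α} (hne : S.Nonempty) (hbdd : BddBelow S) (hb : S ⊆ Iio b)
    (hup : ∀ x ∈ S, Ico x b ⊆ S) : Ioo (sInf S) b ⊆ S ∧ S ⊆ Ico (sInf S) b := by
  refine ⟨fun y hy => ?_, fun x hx => ⟨csInf_le hbdd hx, hb hx⟩⟩
  obtain ⟨x, hx, hxy⟩ := exists_lt_of_csInf_lt hne hy.1
  exact hup x hx ⟨hxy.le, hy.2⟩

section Slicing

variable {α E : Type*} [MeasurableSpace α] {μ : Measure α}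
  [NormedAddCommGroup E] [NormedSpace ℝ E] {F : α → E} {γ : α → ℝ}

lemma sigmaFinite_restrict_iUnion {s : ℕ → Set α} (hs : ∀ n, MeasurableSet (s n))
    (hfin : ∀ n, μ (s n) ≠ ⊤) : SigmaFinite (μ.restrict (⋃ n, s n)) := by
  refine Measure.sigmaFinite_of_countable ((countable_range s).insert (⋃ n, s n)ᶜ) ?_ ?_
  · rintro _ (rfl | ⟨n, rfl⟩)
    · rw [Measure.restrict_apply (MeasurableSet.iUnion hs).compl, compl_inter_self, measure_empty]
      exact ENNReal.zero_lt_top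
    · exact (Measure.restrict_apply_le _ _).trans_lt (hfin n).lt_top
  · rw [sUnion_insert, sUnion_range, compl_union_self]

lemma norm_setIntegral_iUnion_le_of_monotone {s : ℕ → Set α} (hs : ∀ n, MeasurableSet (s n))
    (hmono : Monotone s) (hF : IntegrableOn F (⋃ n, s n) μ) (hfin : μ (⋃ n, s n) ≠ ⊤) {c : ℝ}
    (h : ∀ n, ‖∫ x in s n, F x ∂μ‖ ≤ c * μ.real (s n)) :
    ‖∫ x in ⋃ n, s n, F x ∂μ‖ ≤ c * μ.real (⋃ n, s n) :=
  le_of_tendsto_of_tendsto' (tendsto_setIntegral_of_monotone hs hmono hF).norm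
    (((ENNReal.tendsto_toReal hfin).comp (tendsto_measure_iUnion_atTop hmono)).const_mul c) h

lemma integral_Ioi_indicator_Iio [CompleteSpace E] (y : E) {t : ℝ} (ht : 0 ≤ t) :
    ∫ r in Ioi 0, (Iio t).indicator (fun _ => y) r = t • y := by
  rw [integral_indicator measurableSet_Iio, Measure.restrict_restrict measurableSet_Iio,
    Iio_inter_Ioi, setIntegral_const, Real.volume_real_Ioo_of_le ht, sub_zero]

lemma integrable_indicator_subgraph (hF : AEStronglyMeasurable F μ) (hγ : AEMeasurable γ μ)
    (hγ0 : 0 ≤ᵐ[μ] γ) (hγF : Integrable (fun x => γ x • F x) μ) :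
    Integrable (fun p : α × ℝ => {p | p.2 < γ p.1}.indicator (fun p => F p.1) p)
      (μ.prod (volume.restrict (Ioi 0))) := by
  have hmeas : AEStronglyMeasurable (fun p : α × ℝ => {p | p.2 < γ p.1}.indicator
      (fun p => F p.1) p) (μ.prod (volume.restrict (Ioi 0))) :=
    hF.comp_fst.indicator₀ (nullMeasurableSet_lt measurable_snd.aemeasurable hγ.comp_fst)
  refine (integrable_prod_iff hmeas).2 ⟨Eventually.of_forall fun x => ?_, ?_⟩
  · change Integrable ((Iio (γ x)).indicator fun _ => F x) _
    refine (integrableOn_const (C := F x) ?_).integrable_indicator measurableSet_Iio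
    rw [Measure.restrict_apply measurableSet_Iio, Iio_inter_Ioi, Real.volume_Ioo]
    exact ENNReal.ofReal_ne_top
  · refine hγF.norm.congr ?_
    filter_upwards [hγ0] with x hx
    change ‖γ x • F x‖ = ∫ r in Ioi 0, ‖(Iio (γ x)).indicator (fun _ => F x) r‖
    simp_rw [norm_indicator_eq_indicator_norm]
    rw [integral_Ioi_indicator_Iio _ hx, norm_smul, Real.norm_of_nonneg hx, smul_eq_mul]

variable [SFinite μ]

lemma integrable_setIntegral_lt (hF : AEStronglyMeasurable F μ) (hγ : AEMeasurable γ μ)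
    (hγ0 : 0 ≤ᵐ[μ] γ) (hγF : Integrable (fun x => γ x • F x) μ) :
    Integrable (fun r => ∫ x in {x | r < γ x}, F x ∂μ) (volume.restrict (Ioi 0)) :=
  (integrable_indicator_subgraph hF hγ hγ0 hγF).integral_prod_right.congr <|
    Eventually.of_forall fun _ => integral_indicator₀ (nullMeasurableSet_lt aemeasurable_const hγ)

variable [CompleteSpace E]

lemma integral_smul_eq_integral_setIntegral_lt (hF : AEStronglyMeasurable F μ)
    (hγ : AEMeasurable γ μ) (hγ0 : 0 ≤ᵐ[μ] γ) (hγF : Integrable (fun x => γ x • F x) μ) :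
    ∫ x, γ x • F x ∂μ = ∫ r in Ioi 0, ∫ x in {x | r < γ x}, F x ∂μ := calc
  ∫ x, γ x • F x ∂μ = ∫ x, (∫ r in Ioi 0, (Iio (γ x)).indicator (fun _ => F x) r) ∂μ := by
    refine integral_congr_ae ?_
    filter_upwards [hγ0] with x hx
    rw [integral_Ioi_indicator_Iio _ hx]
  _ = ∫ r in Ioi 0, ∫ x, {x | r < γ x}.indicator F x ∂μ :=
    integral_integral_swap (integrable_indicator_subgraph hF hγ hγ0 hγF)
  _ = ∫ r in Ioi 0, ∫ x in {x | r < γ x}, F x ∂μ := by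
    congr! 2 with r
    exact integral_indicator₀ (nullMeasurableSet_lt aemeasurable_const hγ)

theorem norm_integral_smul_le_of_norm_setIntegral_le (hF : AEStronglyMeasurable F μ)
    (hγ : Integrable γ μ) (hγ0 : 0 ≤ᵐ[μ] γ) (hγF : Integrable (fun x => γ x • F x) μ) {c : ℝ}
    (hc : ∀ r ∈ Ioi 0, ‖∫ x in {x | r < γ x}, F x ∂μ‖ ≤ c * μ.real {x | r < γ x}) :
    ‖∫ x, γ x • F x ∂μ‖ ≤ c * ∫ x, γ x ∂μ := by
  have hlevel : Integrable (fun r => μ.real {x | r < γ x}) (volume.restrict (Ioi 0)) := by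
    simpa only [setIntegral_one_eq_measureReal] using
      integrable_setIntegral_lt (F := fun _ => (1 : ℝ)) aestronglyMeasurable_const hγ.aemeasurable
        hγ0 (by simpa only [smul_eq_mul, mul_one] using hγ)
  calc ‖∫ x, γ x • F x ∂μ‖ = ‖∫ r in Ioi 0, ∫ x in {x | r < γ x}, F x ∂μ‖ := by
        rw [integral_smul_eq_integral_setIntegral_lt hF hγ.aemeasurable hγ0 hγF]
    _ ≤ ∫ r in Ioi 0, ‖∫ x in {x | r < γ x}, F x ∂μ‖ := norm_integral_le_integral_norm _
    _ ≤ ∫ r in Ioi 0, c * μ.real {x | r < γ x} :=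
        setIntegral_mono_on (integrable_setIntegral_lt hF hγ.aemeasurable hγ0 hγF).norm
          (hlevel.const_mul c) measurableSet_Ioi hc
    _ = c * ∫ x, γ x ∂μ := by
        rw [integral_const_mul, hγ.integral_eq_integral_meas_lt hγ0]

end Slicing

section UpperIntervals

variable {E : Type*} [NormedAddCommGroup E] [NormedSpace ℝ E] {μ : Measure ℝ} {F : ℝ → E}

lemma norm_setIntegral_le_of_Ioo_subset_of_subset_Ico {a b c δ : ℝ} {S : Set ℝ}
    (hFδ : ∀ t ∈ Icc a δ, ‖∫ x in Ico t b, F x ∂μ‖ ≤ c * μ.real (Ico t b))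
    (hIoo : Ioo a b ⊆ S) (hIco : S ⊆ Ico a b) (hδS : δ ∈ S) (hF : IntegrableOn F S μ)
    (hfin : μ S ≠ ⊤) : ‖∫ x in S, F x ∂μ‖ ≤ c * μ.real S := by
  by_cases haS : a ∈ S
  · have hS : S = Ico a b := hIco.antisymm fun x hx =>
      hx.1.eq_or_lt.elim (fun h => h ▸ haS) fun h => hIoo ⟨h, hx.2⟩
    exact hS ▸ hFδ a ⟨le_rfl, (hIco hδS).1⟩
  · have hS : S = Ioo a b := Subset.antisymm (fun x hx =>
      ⟨(hIco hx).1.lt_of_ne fun h => haS (h ▸ hx), (hIco hx).2⟩) hIoo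
    have haδ : a < δ := (hIco hδS).1.lt_of_ne fun h => haS (h ▸ hδS)
    obtain ⟨u, hu_anti, hu_mem, hu_lim⟩ := exists_seq_strictAnti_tendsto' haδ
    have hU : ⋃ n, Ico (u n) b = S :=
      hS ▸ iUnion_Ico_eq_Ioo_of_tendsto (fun n => (hu_mem n).1) hu_lim
    rw [← hU] at hF hfin ⊢
    exact norm_setIntegral_iUnion_le_of_monotone (fun _ => measurableSet_Ico)
      (fun m n hmn => Ico_subset_Ico_left (hu_anti.antitone hmn)) hF hfin
      fun n => hFδ (u n) ⟨(hu_mem n).1.le, (hu_mem n).2.le⟩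

lemma norm_setIntegral_le_of_forall_Ico_subset (hμ : μ (Ioo 0 1) = ⊤) {c δ : ℝ}
    (hFδ : ∀ t ∈ Ioc 0 δ, ‖∫ x in Ico t 1, F x ∂μ‖ ≤ c * μ.real (Ico t 1))
    {S : Set ℝ} (hS : S ⊆ Ioo 0 1) (hup : ∀ x ∈ S, Ico x 1 ⊆ S) (hδS : δ ∈ S)
    (hF : IntegrableOn F S μ) (hfin : μ S ≠ ⊤) : ‖∫ x in S, F x ∂μ‖ ≤ c * μ.real S := by
  obtain ⟨hIoo, hIco⟩ := Ioo_csInf_subset_and_subset_Ico ⟨δ, hδS⟩ ⟨0, fun x hx => (hS hx).1.le⟩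
    (fun x hx => (hS hx).2) hup
  have hpos : 0 < sInf S := by
    by_contra! h
    exact hfin (top_le_iff.1 (hμ ▸ measure_mono ((Ioo_subset_Ioo_left h).trans hIoo)))
  exact norm_setIntegral_le_of_Ioo_subset_of_subset_Ico
    (fun t ht => hFδ t ⟨hpos.trans_le ht.1, ht.2⟩) hIoo hIco hδS hF hfin

lemma norm_setIntegral_superlevel_le (hμ : μ (Ioo 0 1) = ⊤) {c δ : ℝ}
    (hFδ : ∀ t ∈ Ioc 0 δ, ‖∫ x in Ico t 1, F x ∂μ‖ ≤ c * μ.real (Ico t 1))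
    {γ : ℝ → ℝ} (hγ : MonotoneOn γ (Ioo 0 1)) (hδ : δ ∈ Ioo 0 1)
    (hγδ : ∀ x ∈ Ioo 0 1, γ x ≤ γ δ) {r : ℝ}
    (hF : IntegrableOn F ({x | r < γ x} ∩ Ioo 0 1) μ) (hfin : μ ({x | r < γ x} ∩ Ioo 0 1) ≠ ⊤) :
    ‖∫ x in {x | r < γ x} ∩ Ioo 0 1, F x ∂μ‖ ≤ c * μ.real ({x | r < γ x} ∩ Ioo 0 1) := by
  rcases eq_empty_or_nonempty ({x | r < γ x} ∩ Ioo 0 1) with hS | ⟨x₀, hx₀⟩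
  · simp [hS]
  refine norm_setIntegral_le_of_forall_Ico_subset hμ hFδ inter_subset_right ?_
    ⟨hx₀.1.trans_le (hγδ x₀ hx₀.2), hδ⟩ hF hfin
  rintro x ⟨hrx, hx⟩ y ⟨hxy, hy1⟩
  have hy : y ∈ Ioo 0 1 := ⟨hx.1.trans_le hxy, hy1⟩
  exact ⟨hrx.trans_le (hγ hx hy hxy), hy⟩

end UpperIntervals

theorem stmt_13
    (μ : Measure ℝ)
    (hμ_fin : ∀ a ∈ Ioo (0:ℝ) 1, μ (Ico a 1) < ⊤)
    (hμ_inf : μ (Ioo 0 1) = ⊤)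
    (F : ℝ → ℂ) (hF_meas : Measurable F) (C : ℝ) (hF_bd : ∀ x, ‖F x‖ ≤ C)
    (ε : ℝ) (hε : 0 < ε) (δ : ℝ) (hδ : δ ∈ Ioo (0:ℝ) 1)
    (hFδ : ∀ a ∈ Ioc (0:ℝ) δ, ‖∫ x in Ico a 1, F x ∂μ‖ < ε / 2 * (μ (Ico a 1)).toReal)
    (γ : ℝ → ℝ) (hγ_nonneg : ∀ x, 0 ≤ γ x)
    (hγ_mono : MonotoneOn γ (Ioo 0 1))
    (hγ_const : ∀ x ∈ Ico δ 1, γ x = γ δ)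
    (hγ_int : IntegrableOn γ (Ioo 0 1) μ)
    (hγ_mass : ∫ x in Ioo 0 1, γ x ∂μ ≤ 1) :
    ‖∫ x in Ioo 0 1, F x * (γ x : ℂ) ∂μ‖ ≤ ε / 2 := by
  have : SigmaFinite (μ.restrict (Ioo 0 1)) := by
    obtain ⟨u, -, hu, hlim⟩ := exists_seq_strictAnti_tendsto' (zero_lt_one' ℝ)
    rw [← iUnion_Ico_eq_Ioo_of_tendsto (fun n => (hu n).1) hlim]
    exact sigmaFinite_restrict_iUnion (fun _ => measurableSet_Ico) fun n => (hμ_fin _ (hu n)).ne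
  have hγ_le : ∀ x ∈ Ioo 0 1, γ x ≤ γ δ := fun x hx =>
    (le_or_gt x δ).elim (hγ_mono hx hδ) fun h => (hγ_const x ⟨h.le, hx.2⟩).le
  have hF_bdd : MemLp F ⊤ (μ.restrict (Ioo 0 1)) :=
    memLp_top_of_bound hF_meas.aestronglyMeasurable C (ae_of_all _ hF_bd)
  have hslice : ∀ r ∈ Ioi 0, ‖∫ x in {x | r < γ x}, F x ∂μ.restrict (Ioo 0 1)‖ ≤
      ε / 2 * (μ.restrict (Ioo 0 1)).real {x | r < γ x} := by
    intro r hr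
    have hfin : μ ({x | r < γ x} ∩ Ioo 0 1) ≠ ⊤ := by
      rw [← Measure.restrict_apply' measurableSet_Ioo]
      exact (hγ_int.measure_gt_lt_top hr).ne
    rw [Measure.restrict_restrict' measurableSet_Ioo, measureReal_restrict_apply' measurableSet_Ioo]
    exact norm_setIntegral_superlevel_le hμ_inf (fun t ht => (hFδ t ht).le) hγ_mono hδ hγ_le
      (Measure.integrableOn_of_bounded hfin hF_meas.aestronglyMeasurable (ae_of_all _ hF_bd)) hfin
  calc ‖∫ x in Ioo 0 1, F x * (γ x : ℂ) ∂μ‖ = ‖∫ x in Ioo 0 1, γ x • F x ∂μ‖ := by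
        simp_rw [Complex.real_smul, mul_comm]
    _ ≤ ε / 2 * ∫ x in Ioo 0 1, γ x ∂μ :=
        norm_integral_smul_le_of_norm_setIntegral_le hF_meas.aestronglyMeasurable hγ_int
          (ae_of_all _ hγ_nonneg) (hγ_int.smul_of_top_left hF_bdd) hslice
    _ ≤ ε / 2 := mul_le_of_le_one_right (by positivity) hγ_mass
end
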